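/- arXiv:1410.4097 — 2 statements merged into one kernel-verified Lean document; each statement's English description precedes it below -/
import Mathlib

section
/- Let R ∈ (0,1). Then the function g_R(t) = 1/t + R^t (log R) / (1 − R^t) is strictly decreasing on (0, ∞). -/
/-!
With `c = -log R > 0` one has `g_R(t) = c · h(c t)` for `h(u) = 1/u - 1/(eᵘ - 1)`, so it suffices
that `h` is strictly decreasing on `(0, ∞)`. Its derivative `-1/u² + eᵘ/(eᵘ - 1)²` is negative
because `eᵘ - 1 = 2 e^{u/2} sinh (u/2) > u e^{u/2}`.
-/

open Real Set

lemma mul_exp_half_lt_exp_sub_one {u : ℝ} (hu : 0 < u) : u * exp (u / 2) < exp u - 1 := by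
  have hsinh : u / 2 < sinh (u / 2) := self_lt_sinh_iff.mpr (half_pos hu)
  have hexp : exp u - 1 = 2 * exp (u / 2) * sinh (u / 2) := by
    rw [sinh_eq, mul_div_assoc', mul_sub, mul_assoc, mul_assoc, ← exp_add, ← exp_add,
      add_neg_cancel, add_halves, exp_zero]
    ring
  rw [hexp]
  nlinarith [exp_pos (u / 2)]

lemma sq_mul_exp_lt_sq_exp_sub_one {u : ℝ} (hu : 0 < u) : u ^ 2 * exp u < (exp u - 1) ^ 2 :=
  calc u ^ 2 * exp u = (u * exp (u / 2)) ^ 2 := by rw [mul_pow, ← exp_nat_mul]; ring_nf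
    _ < (exp u - 1) ^ 2 := by gcongr; exact mul_exp_half_lt_exp_sub_one hu

lemma hasDerivAt_inv_sub_inv_exp_sub_one {u : ℝ} (hu : u ≠ 0) :
    HasDerivAt (fun v => v⁻¹ - (exp v - 1)⁻¹) (-(u ^ 2)⁻¹ + exp u / (exp u - 1) ^ 2) u := by
  have hne : exp u - 1 ≠ 0 := sub_ne_zero.mpr (exp_eq_one_iff u |>.not.mpr hu)
  exact ((hasDerivAt_inv hu).sub (((hasDerivAt_exp u).sub_const 1).fun_inv hne)).congr_deriv
    (by ring)

lemma strictAntiOn_inv_sub_inv_exp_sub_one :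
    StrictAntiOn (fun u => u⁻¹ - (exp u - 1)⁻¹) (Ioi 0) := by
  refine strictAntiOn_of_hasDerivWithinAt_neg (convex_Ioi 0)
    (fun u hu => (hasDerivAt_inv_sub_inv_exp_sub_one
      (ne_of_gt hu)).continuousAt.continuousWithinAt)
    (fun u hu => (hasDerivAt_inv_sub_inv_exp_sub_one
      (ne_of_gt (interior_subset hu))).hasDerivWithinAt) fun u hu => ?_
  replace hu : 0 < u := by rwa [interior_Ioi] at hu
  have hsq := sq_mul_exp_lt_sq_exp_sub_one hu
  have hexp : 0 < exp u - 1 := sub_pos.mpr (one_lt_exp_iff.mpr hu)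
  rw [neg_add_lt_iff_lt_add, add_zero, div_lt_iff₀ (pow_pos hexp 2), ← div_eq_inv_mul,
    lt_div_iff₀ (pow_pos hu 2)]
  linarith

lemma rpow_mul_log_div_one_sub_rpow {R : ℝ} (hR : 0 < R) {t : ℝ} (ht : R ^ t ≠ 1) :
    R ^ t * log R / (1 - R ^ t) = log R * (exp (-log R * t) - 1)⁻¹ := by
  have hexp : exp (-log R * t) = (R ^ t)⁻¹ := by
    rw [rpow_def_of_pos hR, ← exp_neg, neg_mul]
  have h1 : 1 - R ^ t ≠ 0 := sub_ne_zero.mpr ht.symm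
  rw [hexp]
  field_simp

/-- The function t ↦ 1/t + Rᵗ log R / (1 - Rᵗ) is strictly decreasing on (0,∞) for R ∈ (0,1). -/
theorem stmt_7 (R : ℝ) (hR : R ∈ Set.Ioo (0 : ℝ) 1) :
    StrictAntiOn (fun t : ℝ => 1 / t + R ^ t * Real.log R / (1 - R ^ t)) (Set.Ioi 0) := by
  obtain ⟨hR0, hR1⟩ := hR
  have hlog : log R < 0 := log_neg hR0 hR1
  have hc : 0 < -log R := neg_pos.mpr hlog
  have hrescale : ∀ t ∈ Ioi (0 : ℝ), 1 / t + R ^ t * log R / (1 - R ^ t) =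
      -log R * ((-log R * t)⁻¹ - (exp (-log R * t) - 1)⁻¹) := by
    intro t (ht : 0 < t)
    rw [rpow_mul_log_div_one_sub_rpow hR0 (rpow_lt_one hR0.le hR1 ht).ne]
    field_simp [hlog.ne, ht.ne']
    ring
  intro x hx y hy hxy
  simp only [hrescale x hx, hrescale y hy]
  exact mul_lt_mul_of_pos_left (strictAntiOn_inv_sub_inv_exp_sub_one (mul_pos hc hx)
    (mul_pos hc hy) (mul_lt_mul_of_pos_left hxy hc)) hc
end

section
/- Let α > 0, ρ* < 0, and set h_{ρ*}(t) = (t^{ρ*} − 1)/ρ* for t > 0. For λ ∈ [0,1) and κ > 0 define A_{κ,λ} = (1/(1−λ)) ∫_λ^1 h_{ρ*}( (1+κu)^{-1/α} ) du − h_{ρ*}( (1+κ)^{-1/α} ), B_{κ,λ} = h_{ρ*}( (1+κ)^{-1/α} ) − h_{ρ*}( (1+κλ)^{-1/α} ), c_{κ,λ} = (1+κλ)/((1−λ)κ) + ((1+κλ)(1+κ)/((1−λ)^2 κ^2)) log( (1+κλ)/(1+κ) ), δ_{κ,λ} = 1 − ((1+κλ)(1+κ)/((1−λ)^2 κ^2))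 log^2( (1+κ)/(1+κλ) ), and β_{κ,λ} = A_{κ,λ} − B_{κ,λ} c_{κ,λ}. Then lim_{κ → 0+} β_{κ,λ} / δ_{κ,λ} = 1/α − ρ*/α^2. -/
/-!
Put `a = 1 + κλ`, `b = 1 + κ = a e^y` and `s = -ρ*/α > 0`, so that
`h((1 + κu)^(-1/α)) = ((1 + κu)^s - 1)/ρ*`. Everything is homogeneous in `(a, b)`: over the
common denominator `(e^y - 1)²`, the numerator of `(s + 1) ρ* β` is `a^s` times the exponential
polynomial `betaNumer s y`, and that of `δ` is `deltaNumer y`. Fourth-order Taylor expansion of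
the exponentials gives `betaNumer s y = -s(s + 1)² y⁴/12 + O(y⁵)` and
`deltaNumer y = y⁴/12 + O(y⁵)`, hence `β/δ → -s(s + 1)/ρ* = 1/α - ρ*/α²` as `κ → 0+`
(i.e. `y → 0+` and `a → 1`).
-/

open Real Filter Topology Asymptotics Finset
open scoped Nat

lemma isBigO_pow_mul_exp_mul_sub_sum_range (m n : ℕ) (t : ℝ) :
    (fun y => y ^ m * (exp (t * y) - ∑ i ∈ range n, (t * y) ^ i / i !)) =O[𝓝 0]
      (· ^ (m + n)) := by
  have hrem : (fun y => exp (t * y) - ∑ i ∈ range n, (t * y) ^ i / i !) =O[𝓝 0] (· ^ n) := by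
    refine ((exp_sub_sum_range_isBigO_pow n).comp_tendsto
      ((continuous_const_mul t).tendsto' 0 0 (mul_zero t))).trans ?_
    simpa only [Function.comp_def, mul_pow] using
      (isBigO_refl (· ^ n) (𝓝 (0 : ℝ))).const_mul_left (t ^ n)
  simpa only [pow_add] using (isBigO_refl (· ^ m) (𝓝 (0 : ℝ))).mul hrem

lemma tendsto_div_pow_of_sub_isBigO {f : ℝ → ℝ} {c : ℝ} {n : ℕ}
    (h : (fun y => f y - c * y ^ n) =O[𝓝 0] (· ^ (n + 1))) :
    Tendsto (fun y => f y / y ^ n) (𝓝[≠] 0) (𝓝 c) := by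
  have h₀ := (h.trans_isLittleO (isLittleO_pow_pow n.lt_succ_self)).tendsto_div_nhds_zero
  have h₁ := (h₀.mono_left (nhdsWithin_le_nhds (s := {0}ᶜ))).add_const c
  rw [zero_add] at h₁
  refine h₁.congr' ?_
  filter_upwards [self_mem_nhdsWithin] with y hy
  field_simp [pow_ne_zero n hy]
  ring

lemma exp_sub_one_ne_zero {y : ℝ} (hy : y ≠ 0) : exp y - 1 ≠ 0 :=
  sub_ne_zero.2 (mt (exp_eq_one_iff y).1 hy)

noncomputable def betaNumer (s y : ℝ) : ℝ :=
  (s + 1) * y * exp y * (exp (s * y) - 1) - s * (exp ((s + 1) * y) - 1) * (exp y - 1)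

noncomputable def deltaNumer (y : ℝ) : ℝ := (exp y - 1) ^ 2 - y ^ 2 * exp y

lemma beta_closed_form {a b y s : ℝ} (ha : 0 < a) (hy : y ≠ 0) (hs : s + 1 ≠ 0)
    (hb : b = a * exp y) :
    (s + 1) * ((b ^ (s + 1) - a ^ (s + 1)) / ((s + 1) * (b - a)) - b ^ s
      - (b ^ s - a ^ s) * (a / (b - a) + a * b / (b - a) ^ 2 * log (a / b)))
      = a ^ s * betaNumer s y / (exp y - 1) ^ 2 := by
  have hE := exp_sub_one_ne_zero hy
  have hba : b - a = a * (exp y - 1) := by rw [hb]; ring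
  have hlog : log (a / b) = -y := by
    rw [hb, div_mul_cancel_left₀ ha.ne', log_inv, log_exp]
  have hbs : b ^ s = a ^ s * exp (s * y) := by
    rw [hb, mul_rpow ha.le (exp_pos y).le, ← exp_mul, mul_comm y]
  have hbs₁ : b ^ (s + 1) = a ^ s * a * exp ((s + 1) * y) := by
    rw [hb, mul_rpow ha.le (exp_pos y).le, ← exp_mul, mul_comm y, rpow_add_one ha.ne']
  have hexp : exp ((s + 1) * y) = exp y * exp (s * y) := by rw [← exp_add]; ring_nf
  rw [hba, hlog, hbs, hbs₁, rpow_add_one ha.ne', hb, betaNumer, hexp]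
  field_simp
  ring

lemma delta_closed_form {a b y : ℝ} (ha : 0 < a) (hy : y ≠ 0) (hb : b = a * exp y) :
    1 - a * b / (b - a) ^ 2 * log (b / a) ^ 2 = deltaNumer y / (exp y - 1) ^ 2 := by
  have hE := exp_sub_one_ne_zero hy
  have hba : b - a = a * (exp y - 1) := by rw [hb]; ring
  rw [hba, hb, mul_div_cancel_left₀ _ ha.ne', log_exp, deltaNumer]
  field_simp

lemma deltaNumer_sub_isBigO :
    (fun y => deltaNumer y - 1 / 12 * y ^ 4) =O[𝓝 0] (· ^ (4 + 1)) := by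
  have h := ((isBigO_pow_mul_exp_mul_sub_sum_range 0 5 2).sub
    ((isBigO_pow_mul_exp_mul_sub_sum_range 0 5 1).const_mul_left 2)).sub
    (isBigO_pow_mul_exp_mul_sub_sum_range 2 3 1)
  refine h.congr (fun y => ?_) (fun _ => rfl)
  have hsq : exp y ^ 2 = exp (2 * y) := by rw [← exp_nat_mul]; norm_num
  simp only [deltaNumer, sum_range_succ, sum_range_zero, Nat.factorial, one_mul]
  rw [← hsq]
  push_cast
  ring

lemma betaNumer_sub_isBigO (s : ℝ) :
    (fun y => betaNumer s y - (-(s * (s + 1) ^ 2) / 12) * y ^ 4) =O[𝓝 0] (· ^ (4 + 1)) := by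
  -- `betaNumer s y = (s+1) y (e^((s+1)y) - e^y) - s (e^((s+2)y) - e^((s+1)y) - e^y + 1)`
  have h := ((((isBigO_pow_mul_exp_mul_sub_sum_range 1 4 (s + 1)).const_mul_left (s + 1)).sub
    ((isBigO_pow_mul_exp_mul_sub_sum_range 1 4 1).const_mul_left (s + 1))).sub
    ((((isBigO_pow_mul_exp_mul_sub_sum_range 0 5 (s + 2)).sub
      (isBigO_pow_mul_exp_mul_sub_sum_range 0 5 (s + 1))).sub
      (isBigO_pow_mul_exp_mul_sub_sum_range 0 5 1)).const_mul_left s))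
  refine h.congr (fun y => ?_) (fun _ => rfl)
  have hexp₁ : exp y * exp (s * y) = exp ((s + 1) * y) := by rw [← exp_add]; ring_nf
  have hexp₂ : exp ((s + 1) * y) * exp y = exp ((s + 2) * y) := by rw [← exp_add]; ring_nf
  simp only [betaNumer, sum_range_succ, sum_range_zero, Nat.factorial, one_mul]
  push_cast
  linear_combination (-(s + 1) * y) * hexp₁ + s * hexp₂

lemma tendsto_betaNumer_div_deltaNumer (s : ℝ) :
    Tendsto (fun y => betaNumer s y / deltaNumer y) (𝓝[≠] 0) (𝓝 (-(s * (s + 1) ^ 2))) := by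
  have h := (tendsto_div_pow_of_sub_isBigO (betaNumer_sub_isBigO s)).div
    (tendsto_div_pow_of_sub_isBigO deltaNumer_sub_isBigO) (by norm_num)
  rw [show -(s * (s + 1) ^ 2) / 12 / (1 / 12) = -(s * (s + 1) ^ 2) by ring] at h
  refine h.congr' ?_
  filter_upwards [self_mem_nhdsWithin] with y hy
  exact div_div_div_cancel_right₀ (pow_ne_zero 4 hy) _ _

lemma integral_one_add_mul_rpow_sub_one {κ s l : ℝ} (hκ : 0 < κ) (hl : 0 ≤ l) (hs : -1 < s) :
    ∫ u in l..1, ((1 + κ * u) ^ s - 1)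
      = ((1 + κ) ^ (s + 1) - (1 + κ * l) ^ (s + 1)) / ((s + 1) * κ) - (1 - l) := by
  have hcont : ContinuousOn (fun u => (1 + κ * u) ^ s) (Set.uIcc l 1) := by
    refine ContinuousOn.rpow_const (by fun_prop) fun u hu => Or.inl ?_
    have : 0 ≤ u := le_trans (le_min hl zero_le_one) hu.1
    positivity
  rw [intervalIntegral.integral_sub hcont.intervalIntegrable intervalIntegrable_const,
    intervalIntegral.integral_comp_add_mul (· ^ s) hκ.ne', integral_rpow (Or.inl hs),
    intervalIntegral.integral_const, smul_eq_mul, smul_eq_mul, mul_one, mul_one]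
  field_simp

lemma log_one_add_div_one_add_mul_pos {κ l : ℝ} (hκ : 0 < κ) (hl₀ : 0 ≤ l) (hl₁ : l < 1) :
    0 < log ((1 + κ) / (1 + κ * l)) :=
  log_pos ((one_lt_div (by positivity)).2 (by nlinarith))

lemma tendsto_log_one_add_div_one_add_mul {l : ℝ} (hl₀ : 0 ≤ l) (hl₁ : l < 1) :
    Tendsto (fun κ => log ((1 + κ) / (1 + κ * l))) (𝓝[>] 0) (𝓝[≠] 0) := by
  refine tendsto_nhdsWithin_iff.2 ⟨?_, ?_⟩
  · have hcont : ContinuousAt (fun κ : ℝ => log ((1 + κ) / (1 + κ * l))) 0 := by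
      fun_prop (disch := norm_num)
    simpa using hcont.tendsto.mono_left nhdsWithin_le_nhds
  · filter_upwards [self_mem_nhdsWithin] with κ hκ
    exact (log_one_add_div_one_add_mul_pos hκ hl₀ hl₁).ne'

/-- The asymptotic bias coefficient β_{κ,λ}/δ_{κ,λ} tends to 1/α − ρ*/α² as κ → 0+. -/
theorem stmt_19 (α ρ l : ℝ) (hα : 0 < α) (hρ : ρ < 0) (hl : l ∈ Set.Ico (0 : ℝ) 1)
    (h : ℝ → ℝ) (hh : ∀ t : ℝ, 0 < t → h t = (t ^ ρ - 1) / ρ)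
    (A B c δ β : ℝ → ℝ)
    (hA : ∀ κ : ℝ, 0 < κ →
      A κ = (1 / (1 - l)) * (∫ u in l..1, h ((1 + κ * u) ^ (-(1 / α))))
              - h ((1 + κ) ^ (-(1 / α))))
    (hB : ∀ κ : ℝ, 0 < κ →
      B κ = h ((1 + κ) ^ (-(1 / α))) - h ((1 + κ * l) ^ (-(1 / α))))
    (hc : ∀ κ : ℝ, 0 < κ →
      c κ = (1 + κ * l) / ((1 - l) * κ)
              + ((1 + κ * l) * (1 + κ) / ((1 - l) ^ 2 * κ ^ 2)) *
                  Real.log ((1 + κ * l) / (1 + κ)))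
    (hδ : ∀ κ : ℝ, 0 < κ →
      δ κ = 1 - ((1 + κ * l) * (1 + κ) / ((1 - l) ^ 2 * κ ^ 2)) *
                  (Real.log ((1 + κ) / (1 + κ * l))) ^ 2)
    (hβ : ∀ κ : ℝ, 0 < κ → β κ = A κ - B κ * c κ) :
    Tendsto (fun κ => β κ / δ κ) (nhdsWithin 0 (Set.Ioi 0))
      (nhds (1 / α - ρ / α ^ 2)) := by
  obtain ⟨hl₀, hl₁⟩ := hl
  set s := -(1 / α) * ρ with hs_def
  have hs : 0 < s := mul_pos_of_neg_of_neg (by simpa using hα) hρ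
  have hh_rpow (t : ℝ) (ht : 0 < t) : h (t ^ (-(1 / α))) = (t ^ s - 1) / ρ := by
    rw [hh _ (rpow_pos_of_pos ht _), ← rpow_mul ht.le]
  let y (κ : ℝ) : ℝ := log ((1 + κ) / (1 + κ * l))
  have hratio : ∀ κ ∈ Set.Ioi (0 : ℝ),
      (1 + κ * l) ^ s / ((s + 1) * ρ) * (betaNumer s (y κ) / deltaNumer (y κ)) = β κ / δ κ := by
    intro κ (hκ : 0 < κ)
    have ha : 0 < 1 + κ * l := by positivity
    have hb : 1 + κ = (1 + κ * l) * exp (y κ) := by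
      rw [exp_log (by positivity), mul_div_cancel₀ _ ha.ne']
    have hy := (log_one_add_div_one_add_mul_pos hκ hl₀ hl₁).ne'
    have hba : 1 + κ - (1 + κ * l) = (1 - l) * κ := by ring
    have hint : ∫ u in l..1, h ((1 + κ * u) ^ (-(1 / α)))
        = (((1 + κ) ^ (s + 1) - (1 + κ * l) ^ (s + 1)) / ((s + 1) * κ) - (1 - l)) / ρ := by
      rw [intervalIntegral.integral_congr fun u hu => hh_rpow _ ?_, intervalIntegral.integral_div,
        integral_one_add_mul_rpow_sub_one hκ hl₀ (by linarith)]
      have : 0 ≤ u := le_trans (le_min hl₀ zero_le_one) hu.1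
      positivity
    have hβ' : β κ = (1 + κ * l) ^ s * betaNumer s (y κ) / (exp (y κ) - 1) ^ 2 / ((s + 1) * ρ) := by
      rw [eq_div_iff (mul_ne_zero (by linarith) hρ.ne), ← beta_closed_form ha hy (by linarith) hb,
        hβ κ hκ, hA κ hκ, hB κ hκ, hc κ hκ, hint, hh_rpow _ (by positivity), hh_rpow _ ha, hba]
      field_simp [hρ.ne]
      ring
    have hδ' : δ κ = deltaNumer (y κ) / (exp (y κ) - 1) ^ 2 := by
      rw [hδ κ hκ, ← delta_closed_form ha hy hb, hba]
      ring
    rw [hβ', hδ', div_right_comm, div_div_div_cancel_right₀ (pow_ne_zero 2 (exp_sub_one_ne_zero hy))]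
    ring
  have ha : Tendsto (fun κ : ℝ => (1 + κ * l) ^ s) (𝓝[>] 0) (𝓝 1) := by
    refine (Continuous.tendsto' ?_ 0 1 (by simp)).mono_left nhdsWithin_le_nhds
    exact (continuous_const.add (continuous_id.mul continuous_const)).rpow_const
      fun _ => Or.inr hs.le
  have hlim := (ha.div_const ((s + 1) * ρ)).mul
    ((tendsto_betaNumer_div_deltaNumer s).comp (tendsto_log_one_add_div_one_add_mul hl₀ hl₁))
  rw [show 1 / ((s + 1) * ρ) * -(s * (s + 1) ^ 2) = 1 / α - ρ / α ^ 2 by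
    rw [hs_def]; field_simp [hρ.ne]; ring] at hlim
  exact hlim.congr' (eventually_nhdsWithin_of_forall hratio)
end
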